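/- (Periodicity of feasible FSP schedules) Let τ be a parallel task system with r subprograms q^1 > ... > q^r (ordered by decreasing fixed subprogram priority), where subprogram q^ℓ has parameters (O_ℓ, C_ℓ, D_ℓ, T_ℓ) with D_ℓ ≤ T_ℓ and constant execution times. If τ is feasible under the FSP scheduler A on m unit-capacity processors, then the A-schedule is periodic with period P = lcm of all periods, starting at S*_r, where S*_1 = O_1 and S*_j = max{O_j, O_j + ⌈(S*_{j-1} − O_j)/T_j⌉·T_j}. -/
import Mathlib


namespace FSP

/-- `S*_1 = O_1`, `S*_{j+1} = max (O_{j+1}) (O_{j+1} + ⌈(S*_j - O_{j+1})/T_{j+1}⌉·T_{j+1})`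
(0-based; with `ℕ` truncated subtraction this is exactly the paper's recurrence). -/
def Sstar (O T : ℕ → ℕ) : ℕ → ℕ
  | 0 => O 0
  | j + 1 => O (j + 1) + (Sstar O T j - O (j + 1) + T (j + 1) - 1) / T (j + 1) * T (j + 1)

/-- A thread is identified by (subprogram index, instance number).  The `r`
subprograms `q^1 > ⋯ > q^r` of the multi-thread task system are ordered by
decreasing fixed subprogram priority, regardless of the task they belong to;
subprogram `q^ℓ` has parameters `(O ℓ, C ℓ, D ℓ, T ℓ)`. -/
abbrev Thread := ℕ × ℕ

/-- Arrival instant of the `k`-th thread generated by subprogram `ℓ`. -/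
def arrival (O T : ℕ → ℕ) (j : Thread) : ℕ := O j.1 + j.2 * T j.1

/-- Amount of execution received by thread `j` before time `t` in schedule `σ`. -/
def work (σ : ℕ → Finset Thread) (j : Thread) (t : ℕ) : ℕ :=
  ((Finset.range t).filter (fun s => j ∈ σ s)).card

/-- Thread `j` is active at `t`: arrived and not yet completed. -/
def active (r : ℕ) (O C T : ℕ → ℕ) (σ : ℕ → Finset Thread) (j : Thread) (t : ℕ) : Prop :=
  j.1 < r ∧ arrival O T j ≤ t ∧ work σ j t < C j.1

/-- Thread `j'` has higher fixed subprogram priority than `j`. -/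
def hp (j' j : Thread) : Prop :=
  j'.1 < j.1 ∨ (j'.1 = j.1 ∧ j'.2 < j.2)

/-- `σ` is the preemptive FSP schedule of the `r` subprograms on `m` unit-capacity
processors: at every instant the `m` highest-priority active threads execute,
each on one processor. -/
def isFSPSchedule (r m : ℕ) (O C T : ℕ → ℕ) (σ : ℕ → Finset Thread) : Prop :=
  ∀ t : ℕ,
    (σ t).card ≤ m ∧
    (∀ j ∈ σ t, active r O C T σ j t) ∧
    (∀ j : Thread, active r O C T σ j t → j ∉ σ t →
      (σ t).card = m ∧ ∀ j' ∈ σ t, hp j' j)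

/-- No thread ever misses its deadline. -/
def feasible (r : ℕ) (O C D T : ℕ → ℕ) (σ : ℕ → Finset Thread) : Prop :=
  ∀ j : Thread, j.1 < r → work σ j (arrival O T j + D j.1) = C j.1

/-! ### Auxiliary machinery -/

instance decActive (r : ℕ) (O C T : ℕ → ℕ) (σ : ℕ → Finset Thread) (j : Thread) (t : ℕ) :
    Decidable (active r O C T σ j t) := by
  unfold active; exact inferInstance

instance decHp (j' j : Thread) : Decidable (hp j' j) := by
  unfold hp; exact inferInstance

/-- The (finite) set of active threads at time `t`. -/
def Actf (r : ℕ) (O C T : ℕ → ℕ) (σ : ℕ → Finset Thread) (t : ℕ) : Finset Thread :=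
  (Finset.range r ×ˢ Finset.range (t + 1)).filter (fun j => active r O C T σ j t)

/-- The shift of a thread by one hyperperiod. -/
def shift (P : ℕ) (T : ℕ → ℕ) (j : Thread) : Thread := (j.1, j.2 + P / T j.1)

@[simp] lemma shift_fst (P : ℕ) (T : ℕ → ℕ) (j : Thread) : (shift P T j).1 = j.1 := rfl

@[simp] lemma shift_snd (P : ℕ) (T : ℕ → ℕ) (j : Thread) :
    (shift P T j).2 = j.2 + P / T j.1 := rfl

lemma shift_inj (P : ℕ) (T : ℕ → ℕ) : Function.Injective (shift P T) := by
  intro a b h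
  simp only [shift, Prod.mk.injEq] at h
  obtain ⟨h1, h2⟩ := h
  rw [h1] at h2
  exact Prod.ext h1 (by omega)

lemma work_mono (σ : ℕ → Finset Thread) (j : Thread) {s t : ℕ} (h : s ≤ t) :
    work σ j s ≤ work σ j t := by
  apply Finset.card_le_card
  intro x hx
  simp only [Finset.mem_filter, Finset.mem_range] at *
  exact ⟨lt_of_lt_of_le hx.1 h, hx.2⟩

lemma active_deadline {r : ℕ} {O C D T : ℕ → ℕ} {σ : ℕ → Finset Thread}
    (hfeas : feasible r O C D T σ) {j : Thread} {t : ℕ}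
    (h : active r O C T σ j t) : t < arrival O T j + D j.1 := by
  by_contra hc
  push_neg at hc
  have h1 := work_mono σ j hc
  rw [hfeas j h.1] at h1
  have h2 := h.2.2
  omega

lemma mem_Actf {r : ℕ} {O C T : ℕ → ℕ} {σ : ℕ → Finset Thread}
    (hT : ∀ ℓ < r, 0 < T ℓ) {j : Thread} {t : ℕ} :
    j ∈ Actf r O C T σ t ↔ active r O C T σ j t := by
  constructor
  · intro h; exact (Finset.mem_filter.mp h).2
  · intro h
    refine Finset.mem_filter.mpr ⟨Finset.mem_product.mpr ⟨?_, ?_⟩, h⟩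
    · exact Finset.mem_range.mpr h.1
    · have h1 := h.2.1
      have h2 := hT j.1 h.1
      simp only [arrival] at h1
      have h3 : j.2 ≤ j.2 * T j.1 := Nat.le_mul_of_pos_right _ h2
      simp only [Finset.mem_range]
      omega

lemma hp_asymm {a b : Thread} (h1 : hp a b) (h2 : hp b a) : False := by
  unfold hp at h1 h2; omega

lemma hp_irrefl (a : Thread) : ¬ hp a a := by unfold hp; omega

/-- The FSP schedule is uniquely determined: a thread runs iff it is active and
fewer than `m` active threads have higher priority. -/
lemma mem_schedule_iff {r m : ℕ} {O C T : ℕ → ℕ} {σ : ℕ → Finset Thread}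
    (hσ : isFSPSchedule r m O C T σ) (hT : ∀ ℓ < r, 0 < T ℓ) {j : Thread} {t : ℕ} :
    j ∈ σ t ↔ active r O C T σ j t ∧
      ((Actf r O C T σ t).filter (fun j' => hp j' j)).card < m := by
  obtain ⟨hcard, hact, hbusy⟩ := hσ t
  constructor
  · intro hj
    refine ⟨hact j hj, ?_⟩
    have hsub : (Actf r O C T σ t).filter (fun j' => hp j' j) ⊆ (σ t).erase j := by
      intro j' hj'
      obtain ⟨hj'a, hj'hp⟩ := Finset.mem_filter.mp hj'
      have hj'act := (mem_Actf hT).mp hj'a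
      by_cases hmem : j' ∈ σ t
      · refine Finset.mem_erase.mpr ⟨?_, hmem⟩
        rintro rfl
        exact hp_irrefl _ hj'hp
      · exact absurd ((hbusy j' hj'act hmem).2 j hj) (fun h => hp_asymm h hj'hp)
    have h1 := Finset.card_le_card hsub
    have h2 := Finset.card_erase_of_mem hj
    have h3 : 1 ≤ (σ t).card := Finset.card_pos.mpr ⟨j, hj⟩
    omega
  · rintro ⟨hactj, hcount⟩
    by_contra hmem
    obtain ⟨hfull, hall⟩ := hbusy j hactj hmem
    have hsub : σ t ⊆ (Actf r O C T σ t).filter (fun j' => hp j' j) := by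
      intro j' hj'
      exact Finset.mem_filter.mpr ⟨(mem_Actf hT).mpr (hact j' hj'), hall j' hj'⟩
    have h1 := Finset.card_le_card hsub
    omega

lemma Sstar_align (O T : ℕ → ℕ) : ∀ i, ∃ c, Sstar O T i = O i + c * T i
  | 0 => ⟨0, by simp [Sstar]⟩
  | i + 1 => ⟨_, rfl⟩

lemma ceil_le {a t : ℕ} (ht : 0 < t) : a ≤ (a + t - 1) / t * t := by
  have h1 : (a + t - 1) % t < t := Nat.mod_lt _ ht
  have h2 : (a + t - 1) / t * t + (a + t - 1) % t = a + t - 1 := Nat.div_add_mod' _ _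
  omega

lemma Sstar_step {O T : ℕ → ℕ} {ℓ : ℕ} (ht : 0 < T (ℓ + 1)) :
    Sstar O T ℓ ≤ Sstar O T (ℓ + 1) := by
  have h := ceil_le (a := Sstar O T ℓ - O (ℓ + 1)) ht
  show Sstar O T ℓ ≤ O (ℓ + 1) +
    (Sstar O T ℓ - O (ℓ + 1) + T (ℓ + 1) - 1) / T (ℓ + 1) * T (ℓ + 1)
  omega

lemma Sstar_mono {r : ℕ} {O T : ℕ → ℕ} (hT : ∀ ℓ < r, 0 < T ℓ) :
    ∀ {i ℓ}, i ≤ ℓ → ℓ < r → Sstar O T i ≤ Sstar O T ℓ := by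
  intro i ℓ hil hlr
  induction ℓ with
  | zero =>
    have : i = 0 := by omega
    simp [this]
  | succ n ih =>
    rcases Nat.lt_or_ge i (n + 1) with h | h
    · exact le_trans (ih (by omega) (by omega)) (Sstar_step (hT (n + 1) hlr))
    · have : i = n + 1 := by omega
      simp [this]

/-- Main inductive lemma: the schedule restricted to priority levels `≤ ℓ` is
`P`-periodic from `Sstar ℓ` on. -/
lemma main_periodicity {r m : ℕ} {O C D T : ℕ → ℕ} {σ : ℕ → Finset Thread}
    (hT : ∀ ℓ < r, 0 < T ℓ) (hD : ∀ ℓ < r, D ℓ ≤ T ℓ)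
    (hσ : isFSPSchedule r m O C T σ) (hfeas : feasible r O C D T σ)
    (P : ℕ) (hTP : ∀ i < r, T i ∣ P) :
    ∀ t : ℕ, ∀ ℓ, ℓ < r → Sstar O T ℓ ≤ t →
      (σ (t + P)).filter (fun j => j.1 ≤ ℓ) =
        ((σ t).filter (fun j => j.1 ≤ ℓ)).image (shift P T) := by
  intro t
  induction t using Nat.strong_induction_on with
  | _ t IH =>
  intro ℓ hℓ hSt
  -- arrival of shifted thread
  have h_arr_sh : ∀ j : Thread, j.1 < r → arrival O T (shift P T j) = arrival O T j + P := by
    intro j hj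
    show O j.1 + (j.2 + P / T j.1) * T j.1 = O j.1 + j.2 * T j.1 + P
    rw [Nat.add_mul, Nat.div_mul_cancel (hTP j.1 hj)]
    ring
  have hp_sh : ∀ a b : Thread, hp (shift P T a) (shift P T b) ↔ hp a b := by
    intro a b
    unfold hp
    simp only [shift_fst, shift_snd]
    constructor
    · rintro (h | ⟨h1, h2⟩)
      · exact Or.inl h
      · rw [h1] at h2
        exact Or.inr ⟨h1, by omega⟩
    · rintro (h | ⟨h1, h2⟩)
      · exact Or.inl h
      · rw [h1]
        exact Or.inr ⟨rfl, by omega⟩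
  -- any thread of level ≤ ℓ active at t has arrival ≥ Sstar of its level
  have h_arr_lb : ∀ j : Thread, j.1 ≤ ℓ → active r O C T σ j t →
      Sstar O T j.1 ≤ arrival O T j := by
    intro j hjℓ hact
    obtain ⟨c, hc⟩ := Sstar_align O T j.1
    have h1 : t < arrival O T j + T j.1 :=
      lt_of_lt_of_le (active_deadline hfeas hact) (by have := hD j.1 hact.1; omega)
    have h2 : Sstar O T j.1 ≤ t := le_trans (Sstar_mono hT hjℓ hℓ) hSt
    have hTpos := hT j.1 hact.1
    simp only [arrival] at h1 ⊢
    rw [hc] at h2 ⊢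
    have h3 : c < j.2 + 1 := by
      by_contra hcc
      push_neg at hcc
      have h4 : (j.2 + 1) * T j.1 ≤ c * T j.1 := Nat.mul_le_mul_right _ hcc
      rw [Nat.add_mul, one_mul] at h4
      omega
    have h5 : c * T j.1 ≤ j.2 * T j.1 := Nat.mul_le_mul_right _ (by omega)
    omega
  -- any thread of level ≤ ℓ active at t+P is the shift of a thread arriving after Sstar
  have h_unshift : ∀ j'' : Thread, j''.1 ≤ ℓ → active r O C T σ j'' (t + P) →
      ∃ j : Thread, j'' = shift P T j ∧ Sstar O T j.1 ≤ arrival O T j := by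
    intro j'' hjℓ hact
    obtain ⟨c, hc⟩ := Sstar_align O T j''.1
    have hr'' := hact.1
    have hTpos := hT j''.1 hr''
    have hPq : P / T j''.1 * T j''.1 = P := Nat.div_mul_cancel (hTP j''.1 hr'')
    have h1 : t + P < arrival O T j'' + T j''.1 :=
      lt_of_lt_of_le (active_deadline hfeas hact) (by have := hD j''.1 hr''; omega)
    have h2 : Sstar O T j''.1 ≤ t := le_trans (Sstar_mono hT hjℓ hℓ) hSt
    simp only [arrival] at h1
    rw [hc] at h2
    have h3 : c + P / T j''.1 ≤ j''.2 := by
      by_contra hcc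
      push_neg at hcc
      have h4 : j''.2 + 1 ≤ c + P / T j''.1 := hcc
      have h5 := Nat.mul_le_mul_right (T j''.1) h4
      rw [Nat.add_mul, Nat.add_mul, one_mul, hPq] at h5
      omega
    refine ⟨(j''.1, j''.2 - P / T j''.1), ?_, ?_⟩
    · exact Prod.ext rfl (show j''.2 = j''.2 - P / T j''.1 + P / T j''.1 by omega)
    · show Sstar O T j''.1 ≤ O j''.1 + (j''.2 - P / T j''.1) * T j''.1
      rw [hc]
      have h6 : c * T j''.1 ≤ (j''.2 - P / T j''.1) * T j''.1 :=
        Nat.mul_le_mul_right _ (by omega)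
      omega
  -- membership transfer across one period at earlier instants
  have h_mem_equiv : ∀ u, u < t → ∀ j : Thread, j.1 < r → Sstar O T j.1 ≤ u →
      (j ∈ σ u ↔ shift P T j ∈ σ (u + P)) := by
    intro u hu j hjr hSu
    have hIH := IH u hu j.1 hjr hSu
    constructor
    · intro hmem
      have h1 : shift P T j ∈ ((σ u).filter (fun x => x.1 ≤ j.1)).image (shift P T) :=
        Finset.mem_image_of_mem _ (Finset.mem_filter.mpr ⟨hmem, le_refl _⟩)
      rw [← hIH] at h1
      exact (Finset.mem_filter.mp h1).1
    · intro hmem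
      have h1 : shift P T j ∈ (σ (u + P)).filter (fun x => x.1 ≤ j.1) :=
        Finset.mem_filter.mpr ⟨hmem, le_refl _⟩
      rw [hIH] at h1
      obtain ⟨a, ha, hae⟩ := Finset.mem_image.mp h1
      rw [← shift_inj P T hae]
      exact (Finset.mem_filter.mp ha).1
  -- work transfer
  have h_work : ∀ j : Thread, j.1 < r → Sstar O T j.1 ≤ arrival O T j →
      work σ (shift P T j) (t + P) = work σ j t := by
    intro j hjr hSa
    have hset : (Finset.range (t + P)).filter (fun s => shift P T j ∈ σ s)
        = ((Finset.range t).filter (fun s => j ∈ σ s)).image (fun u => u + P) := by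
      ext s
      simp only [Finset.mem_filter, Finset.mem_range, Finset.mem_image]
      constructor
      · rintro ⟨hs, hmem⟩
        have hact := ((hσ s).2.1) (shift P T j) hmem
        have harr : arrival O T j + P ≤ s := by
          rw [← h_arr_sh j hjr]; exact hact.2.1
        refine ⟨s - P, ⟨by omega, ?_⟩, by omega⟩
        refine (h_mem_equiv (s - P) (by omega) j hjr (by omega)).mpr ?_
        rw [show s - P + P = s by omega]
        exact hmem
      · rintro ⟨u, ⟨hu, hmem⟩, rfl⟩
        have hact := ((hσ u).2.1) j hmem
        exact ⟨by omega, (h_mem_equiv u hu j hjr (le_trans hSa hact.2.1)).mp hmem⟩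
    unfold work
    rw [hset]
    exact Finset.card_image_of_injective _ (fun a b h => by omega)
  -- activity transfer
  have h_active_equiv : ∀ j : Thread, j.1 < r → Sstar O T j.1 ≤ arrival O T j →
      (active r O C T σ j t ↔ active r O C T σ (shift P T j) (t + P)) := by
    intro j hjr hSa
    unfold active
    rw [h_arr_sh j hjr, h_work j hjr hSa]
    simp only [shift_fst]
    constructor <;> rintro ⟨h1, h2, h3⟩ <;> exact ⟨h1, by omega, h3⟩
  -- the higher-priority active sets correspond under shift
  have h_hpset : ∀ j : Thread, j.1 ≤ ℓ → j.1 < r →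
      (Actf r O C T σ (t + P)).filter (fun x => hp x (shift P T j)) =
        ((Actf r O C T σ t).filter (fun x => hp x j)).image (shift P T) := by
    intro j hjℓ hjr
    ext x
    simp only [Finset.mem_filter, Finset.mem_image]
    constructor
    · rintro ⟨hxA, hxhp⟩
      have hxact := (mem_Actf hT).mp hxA
      have hxℓ : x.1 ≤ ℓ := by
        unfold hp at hxhp
        simp only [shift_fst] at hxhp
        omega
      obtain ⟨y, rfl, hSy⟩ := h_unshift x hxℓ hxact
      have hyr : y.1 < r := hxact.1
      have hyact : active r O C T σ y t := (h_active_equiv y hyr hSy).mpr hxact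
      exact ⟨y, ⟨(mem_Actf hT).mpr hyact, (hp_sh y j).mp hxhp⟩, rfl⟩
    · rintro ⟨y, ⟨hyA, hyhp⟩, rfl⟩
      have hyact := (mem_Actf hT).mp hyA
      have hyℓ : y.1 ≤ ℓ := by unfold hp at hyhp; omega
      have hSy := h_arr_lb y hyℓ hyact
      have hyr := hyact.1
      exact ⟨(mem_Actf hT).mpr ((h_active_equiv y hyr hSy).mp hyact), (hp_sh y j).mpr hyhp⟩
  -- conclusion
  ext x
  simp only [Finset.mem_filter, Finset.mem_image]
  constructor
  · rintro ⟨hx, hxℓ⟩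
    have hxact := ((hσ (t + P)).2.1) x hx
    obtain ⟨y, rfl, hSy⟩ := h_unshift x hxℓ hxact
    have hyℓ : y.1 ≤ ℓ := hxℓ
    have hyr : y.1 < r := hxact.1
    have hyact := (h_active_equiv y hyr hSy).mpr hxact
    have hcount := ((mem_schedule_iff hσ hT).mp hx).2
    rw [h_hpset y hyℓ hyr, Finset.card_image_of_injective _ (shift_inj P T)] at hcount
    exact ⟨y, ⟨(mem_schedule_iff hσ hT).mpr ⟨hyact, hcount⟩, hyℓ⟩, rfl⟩
  · rintro ⟨y, ⟨hy, hyℓ⟩, rfl⟩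
    have hyact := ((hσ t).2.1) y hy
    have hSy := h_arr_lb y hyℓ hyact
    have hyr := hyact.1
    have hxact := (h_active_equiv y hyr hSy).mp hyact
    have hcount := ((mem_schedule_iff hσ hT).mp hy).2
    refine ⟨(mem_schedule_iff hσ hT).mpr ⟨hxact, ?_⟩, hyℓ⟩
    rw [h_hpset y hyℓ hyr, Finset.card_image_of_injective _ (shift_inj P T)]
    exact hcount

/-- Periodicity of feasible FSP schedules: for an asynchronous constrained-deadline
multi-thread system with `r` subprograms `q^1 > ⋯ > q^r` (constant execution
times), any feasible FSP schedule is periodic with period `P = lcm` of all the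
periods, starting from `S*_r`. -/
theorem periodicity_of_feasible_FSP_schedules
    (r m : ℕ) (hr : 0 < r) (O C D T : ℕ → ℕ)
    (hT : ∀ ℓ < r, 0 < T ℓ) (hD : ∀ ℓ < r, D ℓ ≤ T ℓ)
    (σ : ℕ → Finset Thread)
    (hσ : isFSPSchedule r m O C T σ)
    (hfeas : feasible r O C D T σ)
    (P : ℕ) (hP : P = (Finset.range r).lcm T) :
    ∀ t : ℕ, Sstar O T (r - 1) ≤ t →
      σ (t + P) = (σ t).image (fun j => (j.1, j.2 + P / T j.1)) := by
  intro t ht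
  have hTP : ∀ i < r, T i ∣ P := fun i hi => hP ▸ Finset.dvd_lcm (Finset.mem_range.mpr hi)
  have hmain := main_periodicity hT hD hσ hfeas P hTP t (r - 1) (by omega) ht
  have h1 : (σ t).filter (fun j => j.1 ≤ r - 1) = σ t := by
    apply Finset.filter_true_of_mem
    intro j hj
    have := (((hσ t).2.1) j hj).1
    omega
  have h2 : (σ (t + P)).filter (fun j => j.1 ≤ r - 1) = σ (t + P) := by
    apply Finset.filter_true_of_mem
    intro j hj
    have := (((hσ (t + P)).2.1) j hj).1
    omega
  rw [h1, h2] at hmain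
  exact hmain

end FSP
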